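/- arXiv:2501.12529 — 2 statements merged into one kernel-verified Lean document; each statement's English description precedes it below -/
import Mathlib

section
/- Let q be a positive integer and let u, v be integers with gcd(uv, q) = 1. Then Σ_{χ even primitive mod q} χ(u)·conj(χ(v)) = (1/2) Σ_{d | q, d | u−v} φ(d) μ(q/d) + (1/2) Σ_{d | q, d | u+v} φ(d) μ(q/d), where the sums on the right run over positive divisors d of q dividing u−v (respectively u+v). -/
open Complex ArithmeticFunction

open DirichletCharacter in


lemma aux_ft_gcd {R : Type*} [CommMonoidWithZero R] {n : ℕ} [NeZero n]
    {χ : DirichletCharacter R n} {a b : ℕ}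
    (ha : χ.FactorsThrough a) (hb : χ.FactorsThrough b) :
    χ.FactorsThrough (Nat.gcd a b) := by
  have han : a ∣ n := ha.dvd
  have hbn : b ∣ n := hb.dvd
  have hgn : Nat.gcd a b ∣ n := (Nat.gcd_dvd_left a b).trans han
  rw [factorsThrough_iff_ker_unitsMap hgn]
  rw [factorsThrough_iff_ker_unitsMap han] at ha
  rw [factorsThrough_iff_ker_unitsMap hbn] at hb
  intro x hx
  set X : ℤ := ((x : ZMod n).val : ℤ) with hXdef
  have hXx : ((X : ℤ) : ZMod n) = (x : ZMod n) := by
    simp [hXdef, ZMod.natCast_val, ZMod.cast_id]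
  -- gcd divides X - 1
  have hg1 : ((Nat.gcd a b : ℕ) : ℤ) ∣ X - 1 := by
    have h1 : ((X : ℤ) : ZMod (Nat.gcd a b)) = 1 := by
      have h2 : ((ZMod.unitsMap hgn x : (ZMod (Nat.gcd a b))ˣ) : ZMod (Nat.gcd a b)) = 1 := by
        rw [hx]; rfl
      rw [ZMod.unitsMap_def] at h2
      simp only [Units.coe_map, MonoidHom.coe_coe] at h2
      rw [← hXx, map_intCast] at h2
      exact h2
    have h3 : ((X - 1 : ℤ) : ZMod (Nat.gcd a b)) = 0 := by push_cast [h1]; ring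
    exact (ZMod.intCast_zmod_eq_zero_iff_dvd _ _).mp h3
  obtain ⟨k, hk⟩ := hg1
  have hgab : ((Nat.gcd a b : ℕ) : ℤ) = a * Int.gcdA a b + b * Int.gcdB a b := by
    rw [← Int.gcd_natCast_natCast, Int.gcd_eq_gcd_ab]
  set Z : ℤ := X - a * Int.gcdA a b * k with hZdef
  have hZ1 : Z = 1 + b * (Int.gcdB a b * k) := by
    rw [hZdef]; linear_combination hk + k * hgab
  have hZX : (a : ℤ) ∣ Z - X := ⟨-(Int.gcdA a b * k), by rw [hZdef]; ring⟩
  have hXn : IsCoprime X (n : ℤ) := by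
    rw [Int.isCoprime_iff_gcd_eq_one, Int.gcd_natCast_natCast]
    exact ZMod.val_coe_unit_coprime x
  have hZa : IsCoprime Z (a : ℤ) := by
    have hXa : IsCoprime X (a : ℤ) :=
      hXn.of_isCoprime_of_dvd_right (Int.natCast_dvd_natCast.mpr han)
    have : Z = X + (a : ℤ) * (-(Int.gcdA a b * k)) := by rw [hZdef]; ring
    rw [this]; exact hXa.add_mul_left_left _
  have hZb : IsCoprime Z (b : ℤ) := by
    rw [hZ1]; exact (isCoprime_one_left).add_mul_left_left _
  have hLn : Nat.lcm a b ∣ n := Nat.lcm_dvd han hbn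
  have hLab : ((Nat.lcm a b : ℕ) : ℤ) ∣ (a * b : ℤ) := by
    exact_mod_cast Int.natCast_dvd_natCast.mpr (Nat.lcm_dvd_mul a b)
  have hZL : IsCoprime Z ((Nat.lcm a b : ℕ) : ℤ) :=
    (hZa.mul_right hZb).of_isCoprime_of_dvd_right hLab
  have hZLunit : IsUnit ((Z : ℤ) : ZMod (Nat.lcm a b)) := by
    obtain ⟨s, t, hst⟩ := hZL
    refine IsUnit.of_mul_eq_one ((s : ℤ) : ZMod (Nat.lcm a b)) ?_
    have : ((s * Z + t * (Nat.lcm a b : ℤ) : ℤ) : ZMod (Nat.lcm a b)) = 1 := by rw [hst]; simp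
    rw [← this]; push_cast; simp [mul_comm]
  obtain ⟨w, hw⟩ := ZMod.unitsMap_surjective hLn hZLunit.unit
  have hwZ : (ZMod.castHom hLn (ZMod (Nat.lcm a b))) ((w : (ZMod n)ˣ) : ZMod n)
      = ((Z : ℤ) : ZMod (Nat.lcm a b)) := by
    have := congrArg (Units.val) hw
    rw [ZMod.unitsMap_def] at this
    simpa using this
  -- value of w mod d for d | lcm
  have hcast : ∀ (d : ℕ) (hd : d ∣ Nat.lcm a b),
      (ZMod.castHom (hd.trans hLn) (ZMod d)) ((w : (ZMod n)ˣ) : ZMod n) = ((Z : ℤ) : ZMod d) := by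
    intro d hd
    have hcomp := ZMod.castHom_comp hd hLn
    have : (ZMod.castHom hd (ZMod d)).comp (ZMod.castHom hLn (ZMod (Nat.lcm a b)))
        ((w : (ZMod n)ˣ) : ZMod n) = ((Z : ℤ) : ZMod d) := by
      rw [RingHom.comp_apply, hwZ, map_intCast]
    rwa [hcomp] at this
  have hwb : ZMod.unitsMap hbn w = 1 := by
    ext
    simp only [ZMod.unitsMap_def, Units.coe_map, MonoidHom.coe_coe, Units.val_one]
    rw [hcast b (Nat.dvd_lcm_right a b)]
    rw [hZ1]; push_cast; simp
  have hwa : ZMod.unitsMap han w = ZMod.unitsMap han x := by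
    ext
    simp only [ZMod.unitsMap_def, Units.coe_map, MonoidHom.coe_coe]
    rw [hcast a (Nat.dvd_lcm_left a b), ← hXx, map_intCast]
    exact (ZMod.intCast_eq_intCast_iff _ _ _).mpr
      ((Int.modEq_iff_dvd).mpr (dvd_sub_comm.mp hZX))
  have h1 : χ.toUnitHom w = 1 := hb (by rw [MonoidHom.mem_ker, hwb])
  have h2 : χ.toUnitHom (x * w⁻¹) = 1 := ha (by
    rw [MonoidHom.mem_ker, map_mul, map_inv, hwa]
    simp)
  rw [MonoidHom.mem_ker]
  have : x = x * w⁻¹ * w := by group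
  rw [this, map_mul, h1, h2, one_mul]

open DirichletCharacter
lemma aux_conductor_dvd {R : Type*} [CommMonoidWithZero R] {n : ℕ} [NeZero n]
    {χ : DirichletCharacter R n} {d : ℕ} (h : χ.FactorsThrough d) :
    χ.conductor ∣ d := by
  have hg := aux_ft_gcd (factorsThrough_conductor χ) h
  have h1 : χ.conductor ≤ Nat.gcd χ.conductor d := Nat.sInf_le hg
  have h2 : Nat.gcd χ.conductor d ≤ χ.conductor :=
    Nat.le_of_dvd (Nat.pos_of_ne_zero (conductor_ne_zero χ)) (Nat.gcd_dvd_left _ _)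
  have : Nat.gcd χ.conductor d = χ.conductor := le_antisymm h2 h1
  exact this ▸ Nat.gcd_dvd_right _ _

lemma aux_conductor_changeLevel {R : Type*} [CommMonoidWithZero R] {n d : ℕ} [NeZero n]
    (h : d ∣ n) (χ₀ : DirichletCharacter R d) (hχ₀ : χ₀.IsPrimitive) :
    (changeLevel h χ₀).conductor = d := by
  haveI : NeZero d := ⟨fun hd ↦ NeZero.ne n (Nat.eq_zero_of_zero_dvd (hd ▸ h))⟩
  set χ := changeLevel h χ₀ with hχ
  have hft : χ.FactorsThrough d := ⟨h, χ₀, rfl⟩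
  have hcd : χ.conductor ∣ d := aux_conductor_dvd hft
  refine Nat.dvd_antisymm hcd ?_
  have hFT := χ.factorsThrough_conductor
  have heq : χ = changeLevel hFT.dvd hFT.χ₀ := hFT.eq_changeLevel
  have heq2 : changeLevel h χ₀ = changeLevel h (changeLevel hcd hFT.χ₀) := by
    rw [← changeLevel_trans _ hcd h]
    exact heq
  have hinj : χ₀ = changeLevel hcd hFT.χ₀ := changeLevel_injective h heq2
  have : χ₀.FactorsThrough χ.conductor := ⟨hcd, hFT.χ₀, hinj⟩
  have := aux_conductor_dvd this
  rwa [hχ₀] at this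


lemma aux_changeLevel_intCast {m d : ℕ} (h : d ∣ m) (χ₀ : DirichletCharacter ℂ d) (w : ℤ)
    (hw : IsUnit ((w : ZMod m))) :
    (changeLevel h χ₀) ((w : ZMod m)) = χ₀ ((w : ZMod d)) := by
  have h1 := changeLevel_eq_cast_of_dvd χ₀ h hw.unit
  rw [IsUnit.unit_spec] at h1
  rw [h1]
  congr 1
  have h2 : (ZMod.castHom h (ZMod d)) ((w : ZMod m)) = ((w : ZMod d)) := map_intCast _ w
  rwa [ZMod.castHom_apply] at h2

lemma aux_conj_apply {m : ℕ} [NeZero m] (χ : DirichletCharacter ℂ m) {a : ZMod m}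
    (ha : IsUnit a) : (starRingEnd ℂ) (χ a) = χ a⁻¹ := by
  have h1 : star (χ a) = χ⁻¹ a := MulChar.star_apply' χ a
  rw [starRingEnd_apply, h1, MulChar.inv_apply_eq_inv']
  have h2 : χ a * χ a⁻¹ = 1 := by
    rw [← map_mul χ a a⁻¹, ZMod.mul_inv_of_unit a ha, map_one]
  exact inv_eq_of_mul_eq_one_right h2

lemma aux_F (m : ℕ) [NeZero m] {a b : ZMod m} (ha : IsUnit a) (hb : IsUnit b) :
    ∑ χ : DirichletCharacter ℂ m, χ b * (starRingEnd ℂ) (χ a)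
      = if a = b then (m.totient : ℂ) else 0 := by
  rw [← DirichletCharacter.sum_char_inv_mul_char_eq ℂ ha b]
  exact Finset.sum_congr rfl fun χ _ => by rw [aux_conj_apply χ ha, mul_comm]

open scoped Classical in
lemma aux_sum_primitive (q : ℕ) [NeZero q] (u v : ℤ)
    (hu : IsUnit ((u : ZMod q))) (hv : IsUnit ((v : ZMod q))) :
    ∑ χ ∈ Finset.univ.filter (fun χ : DirichletCharacter ℂ q => χ.IsPrimitive),
        χ (u : ZMod q) * (starRingEnd ℂ) (χ (v : ZMod q))
    = ∑ d ∈ q.divisors.filter (fun d : ℕ => (d : ℤ) ∣ (u - v)),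
        (Nat.totient d : ℂ) * ((moebius (q / d)) : ℂ) := by
  have hunit : ∀ (w : ℤ), IsUnit ((w : ZMod q)) → ∀ {d : ℕ}, d ∣ q → IsUnit ((w : ZMod d)) := by
    intro w hw d hd
    have := hw.map (ZMod.castHom hd (ZMod d))
    rwa [map_intCast] at this
  set G : ℕ → ℂ := fun d =>
    ∑ χ ∈ Finset.univ.filter (fun χ : DirichletCharacter ℂ d => χ.IsPrimitive),
      χ (u : ZMod d) * (starRingEnd ℂ) (χ (v : ZMod d)) with hGdef
  -- step 1 : grouping by conductor
  have key : ∀ m : ℕ, m ∣ q → (∑ d ∈ m.divisors, G d)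
      = ∑ χ : DirichletCharacter ℂ m, χ (u : ZMod m) * (starRingEnd ℂ) (χ (v : ZMod m)) := by
    intro m hm
    haveI : NeZero m := ⟨fun h => NeZero.ne q (Nat.eq_zero_of_zero_dvd (h ▸ hm))⟩
    rw [hGdef]
    rw [Finset.sum_sigma' m.divisors
      (fun d => Finset.univ.filter (fun χ : DirichletCharacter ℂ d => χ.IsPrimitive))
      (fun d χ => χ (u : ZMod d) * (starRingEnd ℂ) (χ (v : ZMod d)))]
    refine Finset.sum_bij
      (fun x hx => changeLevel (Nat.dvd_of_mem_divisors (Finset.mem_sigma.mp hx).1) x.2)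
      (fun x hx => Finset.mem_univ _) ?_ ?_ ?_
    · -- injectivity
      intro x hx y hy hxy
      have hxp : x.2.IsPrimitive := (Finset.mem_filter.mp (Finset.mem_sigma.mp hx).2).2
      have hyp : y.2.IsPrimitive := (Finset.mem_filter.mp (Finset.mem_sigma.mp hy).2).2
      have hco : x.1 = y.1 := by
        rw [← aux_conductor_changeLevel (Nat.dvd_of_mem_divisors (Finset.mem_sigma.mp hx).1) x.2 hxp,
            ← aux_conductor_changeLevel (Nat.dvd_of_mem_divisors (Finset.mem_sigma.mp hy).1) y.2 hyp,
            hxy]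
      obtain ⟨d₁, χ₁⟩ := x
      obtain ⟨d₂, χ₂⟩ := y
      subst hco
      simp only [Sigma.mk.inj_iff, heq_eq_eq, true_and]
      exact changeLevel_injective (Nat.dvd_of_mem_divisors (Finset.mem_sigma.mp hx).1) hxy
    · -- surjectivity
      intro χ _
      have hspec : χ = changeLevel χ.conductor_dvd_level χ.primitiveCharacter :=
        Classical.choose_spec (χ.factorsThrough_conductor).choose_spec
      refine ⟨⟨χ.conductor, χ.primitiveCharacter⟩, ?_, ?_⟩
      · rw [Finset.mem_sigma]
        constructor
        · exact Nat.mem_divisors.mpr ⟨χ.conductor_dvd_level, NeZero.ne m⟩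
        · exact Finset.mem_filter.mpr ⟨Finset.mem_univ _, χ.primitiveCharacter_isPrimitive⟩
      · exact hspec.symm
    · -- values
      intro x hx
      have hd : x.1 ∣ m := Nat.dvd_of_mem_divisors (Finset.mem_sigma.mp hx).1
      rw [aux_changeLevel_intCast hd x.2 u (hunit u hu hm),
          aux_changeLevel_intCast hd x.2 v (hunit v hv hm)]
  -- step 2 : Möbius inversion
  have hmob := (ArithmeticFunction.sum_eq_iff_sum_mul_moebius_eq (R := ℂ)
      (f := G) (g := fun m => ∑ d ∈ m.divisors, G d)).mp (fun n _ => rfl) q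
      (Nat.pos_of_ne_zero (NeZero.ne q))
  -- hmob : ∑ x in q.divisorsAntidiagonal, μ x.1 * (∑ d in x.2.divisors, G d) = G q
  have : ∑ χ ∈ Finset.univ.filter (fun χ : DirichletCharacter ℂ q => χ.IsPrimitive),
        χ (u : ZMod q) * (starRingEnd ℂ) (χ (v : ZMod q)) = G q := rfl
  rw [this, ← hmob]
  have step : ∀ x ∈ q.divisorsAntidiagonal,
      (moebius x.1 : ℂ) * (∑ d ∈ x.2.divisors, G d)
        = (moebius x.1 : ℂ) * (if ((v : ZMod x.2) = (u : ZMod x.2)) then (x.2.totient : ℂ) else 0) := by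
    intro x hx
    obtain ⟨hprod, hq0⟩ := Nat.mem_divisorsAntidiagonal.mp hx
    have hx2 : x.2 ∣ q := Dvd.intro_left x.1 hprod
    haveI : NeZero x.2 := ⟨fun h => hq0 (by rw [← hprod, h, mul_zero])⟩
    rw [key x.2 hx2, aux_F x.2 (hunit v hv hx2) (hunit u hu hx2)]
  rw [Finset.sum_congr rfl step]
  rw [Nat.sum_divisorsAntidiagonal'
    (f := fun i j => (moebius i : ℂ) * (if ((v : ZMod j) = (u : ZMod j)) then (j.totient : ℂ) else 0))]
  rw [Finset.sum_filter]
  refine Finset.sum_congr rfl fun d hd => ?_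
  have hiff : ((v : ZMod d) = (u : ZMod d)) ↔ ((d : ℤ) ∣ u - v) := by
    rw [ZMod.intCast_eq_intCast_iff]
    exact Int.modEq_iff_dvd
  by_cases hcase : (d : ℤ) ∣ u - v
  · rw [if_pos hcase, if_pos (hiff.mpr hcase), mul_comm]
  · rw [if_neg hcase, if_neg (fun h => hcase (hiff.mp h)), mul_zero]

theorem stmt_3 (q : ℕ) (hq : 0 < q) (u v : ℤ) (huv : Int.gcd (u * v) q = 1) :
    (∑ᶠ χ : {χ : DirichletCharacter ℂ q // χ (-1) = 1 ∧ χ.IsPrimitive},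
        χ.1 ((u : ZMod q)) * (starRingEnd ℂ) (χ.1 ((v : ZMod q)))) =
      (1 / 2) * (∑ d ∈ q.divisors.filter (fun d : ℕ => (d : ℤ) ∣ (u - v)),
          (Nat.totient d : ℂ) * (moebius (q / d) : ℂ)) +
      (1 / 2) * (∑ d ∈ q.divisors.filter (fun d : ℕ => (d : ℤ) ∣ (u + v)),
          (Nat.totient d : ℂ) * (moebius (q / d) : ℂ)) := by
  classical
  haveI : NeZero q := ⟨hq.ne'⟩
  have hcop : IsCoprime (u * v) (q : ℤ) := by
    rw [Int.isCoprime_iff_gcd_eq_one]; exact_mod_cast huv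
  have unit_of : ∀ w : ℤ, IsCoprime w (q : ℤ) → IsUnit ((w : ZMod q)) := by
    rintro w ⟨s, t, hst⟩
    refine IsUnit.of_mul_eq_one ((s : ℤ) : ZMod q) ?_
    have h2 := congrArg (fun z : ℤ => ((z : ℤ) : ZMod q)) hst
    push_cast at h2
    simpa [ZMod.natCast_self, mul_comm] using h2
  have hu : IsUnit ((u : ZMod q)) := unit_of u hcop.of_mul_left_left
  have hv : IsUnit ((v : ZMod q)) := unit_of v hcop.of_mul_left_right
  have hnv : IsUnit (((-v : ℤ) : ZMod q)) := by
    have : ((-v : ℤ) : ZMod q) = -((v : ℤ) : ZMod q) := by push_cast; ring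
    rw [this]; exact hv.neg
  rw [finsum_eq_sum_of_fintype]
  rw [← Finset.sum_subtype
    (Finset.univ.filter (fun χ : DirichletCharacter ℂ q => χ (-1) = 1 ∧ χ.IsPrimitive))
    (by simp) (fun χ : DirichletCharacter ℂ q => χ (u : ZMod q) * (starRingEnd ℂ) (χ (v : ZMod q)))]
  have split : Finset.univ.filter (fun χ : DirichletCharacter ℂ q => χ (-1) = 1 ∧ χ.IsPrimitive)
      = (Finset.univ.filter (fun χ : DirichletCharacter ℂ q => χ.IsPrimitive)).filter
          (fun χ => χ (-1) = 1) := by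
    ext χ; simp [and_comm]
  rw [split, Finset.sum_filter]
  have per : ∀ χ ∈ Finset.univ.filter (fun χ : DirichletCharacter ℂ q => χ.IsPrimitive),
      (if χ (-1) = 1 then χ (u : ZMod q) * (starRingEnd ℂ) (χ (v : ZMod q)) else 0)
      = (1/2 : ℂ) * (χ (u : ZMod q) * (starRingEnd ℂ) (χ (v : ZMod q)))
        + (1/2 : ℂ) * (χ (u : ZMod q) * (starRingEnd ℂ) (χ ((-v : ℤ) : ZMod q))) := by
    intro χ _
    have hneg : χ ((-v : ℤ) : ZMod q) = χ (-1) * χ ((v : ℤ) : ZMod q) := by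
      have h3 : ((-v : ℤ) : ZMod q) = (-1) * ((v : ℤ) : ZMod q) := by push_cast; ring
      rw [h3, map_mul χ]
    have hpm : χ (-1) = 1 ∨ χ (-1) = -1 := by
      have h2 : χ (-1) * χ (-1) = 1 := by
        rw [← map_mul χ, neg_one_mul, neg_neg, map_one]
      exact mul_self_eq_one_iff.mp h2
    rcases hpm with h | h
    · rw [if_pos h, hneg, h, one_mul]; ring
    · rw [if_neg (by rw [h]; intro hh; norm_num at hh), hneg, h, neg_one_mul, map_neg]
      ring
  rw [Finset.sum_congr rfl per, Finset.sum_add_distrib, ← Finset.mul_sum, ← Finset.mul_sum]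
  rw [aux_sum_primitive q u v hu hv, aux_sum_primitive q u (-v) hu hnv]
  simp only [sub_neg_eq_add]
end

section
/- Let r be a positive integer and let u be a complex number with Re(u) > 2. Then the series Σ_{q ≥ 1, gcd(q,r)=1} ( Σ_{d | q} μ(d) φ(q/d) ) q^{−u} converges absolutely and equals ( ζ(u−1) / ζ(u)^2 ) · ∏_{p | r} (1 − p^{1−u}) (1 − p^{−u})^{−2}, where the product runs over the primes p dividing r. -/
open Complex ArithmeticFunction


private noncomputable def ffn (n : ℕ) : ℂ :=
  ∑ d ∈ n.divisors, (moebius d : ℂ) * (Nat.totient (n / d) : ℂ)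

private noncomputable def FF (u : ℂ) (n : ℕ) : ℂ := ffn n * (n : ℂ) ^ (-u)

private noncomputable def phiAF : ArithmeticFunction ℂ :=
  ⟨fun n => (Nat.totient n : ℂ), by simp⟩

private lemma ffn_eq (n : ℕ) :
    ffn n = (((moebius : ArithmeticFunction ℤ) : ArithmeticFunction ℂ) * phiAF) n := by
  rw [ArithmeticFunction.mul_apply, Nat.sum_divisorsAntidiagonal
    (fun d e => (((moebius : ArithmeticFunction ℤ) : ArithmeticFunction ℂ)) d * phiAF e)]
  rfl

private lemma ffn_mult : (∀ {m n : ℕ}, Nat.Coprime m n → ffn (m * n) = ffn m * ffn n) := by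
  have h : (((moebius : ArithmeticFunction ℤ) : ArithmeticFunction ℂ) * phiAF).IsMultiplicative := by
    refine (isMultiplicative_moebius.intCast).mul ⟨?_, ?_⟩
    · show ((Nat.totient 1 : ℕ) : ℂ) = 1; simp
    · intro m n hmn; show ((Nat.totient _ : ℕ) : ℂ) = _
      rw [Nat.totient_mul hmn]; push_cast; rfl
  intro m n hmn
  rw [ffn_eq, ffn_eq, ffn_eq, h.map_mul_of_coprime hmn]

private lemma ffn_zero : ffn 0 = 0 := by simp [ffn]

private lemma ffn_one : ffn 1 = 1 := by simp [ffn]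

private lemma ffn_bound (n : ℕ) : ‖ffn n‖ ≤ (n : ℝ) := by
  calc ‖ffn n‖ ≤ ∑ d ∈ n.divisors, ‖(moebius d : ℂ) * (Nat.totient (n / d) : ℂ)‖ :=
        norm_sum_le _ _
    _ ≤ ∑ d ∈ n.divisors, (Nat.totient (n / d) : ℝ) := by
        refine Finset.sum_le_sum fun d _ => ?_
        rw [norm_mul]
        have h1 : ‖(moebius d : ℂ)‖ ≤ 1 := by
          rw [Complex.norm_intCast, ← Int.cast_abs]
          exact_mod_cast abs_moebius_le_one (n := d)
        have h2 : ‖(Nat.totient (n / d) : ℂ)‖ = (Nat.totient (n / d) : ℝ) := by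
          rw [Complex.norm_natCast]
        nlinarith [norm_nonneg ((Nat.totient (n / d) : ℂ))]
    _ = ((∑ d ∈ n.divisors, Nat.totient (n / d) : ℕ) : ℝ) := by push_cast; rfl
    _ = (n : ℝ) := by rw [Nat.sum_div_divisors n Nat.totient, Nat.sum_totient]

private lemma ffn_eq_conv :
    ffn = LSeries.convolution (fun n => (moebius n : ℂ)) (fun n => (Nat.totient n : ℂ)) := by
  funext n
  rw [LSeries.convolution_def]
  exact (Nat.sum_divisorsAntidiagonal (fun d e => (moebius d : ℂ) * (Nat.totient e : ℂ))).symm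

private lemma tele {b : ℕ → ℂ} {x S : ℂ} (hb : HasSum (fun k => b k * x ^ k) S)
    {a : ℕ → ℂ} (h0 : a 0 = b 0) (hs : ∀ k, a (k + 1) = b (k + 1) - b k) :
    HasSum (fun k => a k * x ^ k) ((1 - x) * S) := by
  set g : ℕ → ℂ := fun k => Nat.casesOn k 0 (fun j => x * (b j * x ^ j)) with hg
  have hG : HasSum g (x * S) := by
    have h1 : HasSum (fun n => g (n + 1)) (x * S) := by
      simpa [hg] using hb.mul_left x
    have h2 := (hasSum_nat_add_iff (f := g) 1).mp h1
    simpa [hg] using h2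
  have key : (fun k => a k * x ^ k) = fun k => b k * x ^ k - g k := by
    funext k
    cases k with
    | zero => simp [h0, hg]
    | succ j => rw [hs j]; show _ = _ - x * (b j * x ^ j); rw [pow_succ]; ring
  rw [key]
  convert hb.sub hG using 1
  · rfl
  ring

private lemma cpow_nat_pow (m : ℕ) (k : ℕ) (s : ℂ) :
    ((m ^ k : ℕ) : ℂ) ^ s = (((m : ℕ) : ℂ) ^ s) ^ k := by
  induction k with
  | zero => simp
  | succ k ih =>
    have : ((m ^ (k+1) : ℕ) : ℂ) = ((((m^k : ℕ) : ℝ)) : ℂ) * (((m : ℕ) : ℝ) : ℂ) := by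
      push_cast; ring
    rw [this, mul_cpow_ofReal_nonneg (by positivity) (by positivity), pow_succ, ← ih]
    norm_num

section Lseries

variable {u : ℂ} (hu : 2 < u.re)
include hu

private lemma hu1 : 1 < u.re := by linarith

private lemma sum_phi : LSeriesSummable (fun n => (Nat.totient n : ℂ)) u := by
  refine LSeriesSummable_of_le_const_mul_rpow (x := 2) (by linarith) ⟨1, fun n hn => ?_⟩
  rw [Complex.norm_natCast, one_mul, show (2:ℝ) - 1 = 1 by norm_num, Real.rpow_one]
  exact_mod_cast Nat.totient_le n

private lemma sum_ffn : LSeriesSummable ffn u := by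
  refine LSeriesSummable_of_le_const_mul_rpow (x := 2) (by linarith) ⟨1, fun n hn => ?_⟩
  rw [one_mul, show (2:ℝ) - 1 = 1 by norm_num, Real.rpow_one]
  exact ffn_bound n

omit hu in
private lemma term_id (n : ℕ) :
    LSeries.term (fun n => (n : ℂ)) u n = LSeries.term 1 (u - 1) n := by
  rcases eq_or_ne n 0 with rfl | hn
  · simp
  · rw [LSeries.term_of_ne_zero hn, LSeries.term_of_ne_zero hn, Pi.one_apply]
    have hn0 : (n : ℂ) ≠ 0 := Nat.cast_ne_zero.mpr hn
    have hcp : (n : ℂ) ^ u = (n : ℂ) ^ (u - 1) * (n : ℂ) := by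
      conv_lhs => rw [show u = u - 1 + 1 by ring]
      rw [cpow_add _ _ hn0, cpow_one]
    have hne : (n : ℂ) ^ (u - 1) ≠ 0 := by
      simp [Complex.cpow_eq_zero_iff, hn0]
    rw [hcp]
    field_simp

private lemma L_id : LSeries (fun n => (n : ℂ)) u = riemannZeta (u - 1) := by
  have h : LSeries (fun n => (n : ℂ)) u = LSeries 1 (u - 1) := by
    unfold LSeries
    exact tsum_congr term_id
  rw [h, LSeries_one_eq_riemannZeta (by simp; linarith)]

private lemma L_phi : LSeries (fun n => (Nat.totient n : ℂ)) u
    = riemannZeta (u - 1) / riemannZeta u := by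
  have hζ : riemannZeta u ≠ 0 := riemannZeta_ne_zero_of_one_lt_re (hu1 hu)
  have hconv : LSeries.convolution (fun n => (Nat.totient n : ℂ)) (1 : ℕ → ℂ)
      = (fun n : ℕ => (n : ℂ)) := by
    rw [LSeries.convolution_def]
    funext n
    rw [Nat.sum_divisorsAntidiagonal (fun d e => ((Nat.totient d : ℂ)) * (1 : ℕ → ℂ) e)]
    rcases eq_or_ne n 0 with rfl | hn
    · simp
    · simp only [Pi.one_apply, mul_one]
      rw [show (∑ d ∈ n.divisors, (Nat.totient d : ℂ))
        = ((∑ d ∈ n.divisors, Nat.totient d : ℕ) : ℂ) by push_cast; rfl]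
      rw [Nat.sum_totient]
  have h1 : LSeriesSummable (1 : ℕ → ℂ) u := LSeriesSummable_one_iff.mpr (hu1 hu)
  have h2 := LSeries_convolution' (sum_phi hu) h1
  rw [hconv, L_id hu, LSeries_one_eq_riemannZeta (hu1 hu)] at h2
  rw [eq_div_iff hζ]
  exact h2.symm

private lemma L_mu : LSeries (fun n => (moebius n : ℂ)) u = (riemannZeta u)⁻¹ := by
  have h := LSeries_zeta_mul_Lseries_moebius (hu1 hu)
  rw [LSeries_zeta_eq_riemannZeta (hu1 hu)] at h
  rw [mul_comm] at h
  exact eq_inv_of_mul_eq_one_left h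

private lemma L_ffn : LSeries ffn u = riemannZeta (u - 1) / (riemannZeta u) ^ 2 := by
  have hζ : riemannZeta u ≠ 0 := riemannZeta_ne_zero_of_one_lt_re (hu1 hu)
  have hmu : LSeriesSummable (fun n => (moebius n : ℂ)) u :=
    LSeriesSummable_moebius_iff.mpr (hu1 hu)
  rw [ffn_eq_conv, LSeries_convolution' hmu (sum_phi hu), L_mu hu, L_phi hu]
  rw [div_eq_mul_inv, div_eq_mul_inv, sq, mul_inv]
  ring

private lemma FF_eq_term (n : ℕ) : FF u n = LSeries.term ffn u n := by
  rcases eq_or_ne n 0 with rfl | hn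
  · simp [FF, ffn_zero]
  · rw [LSeries.term_of_ne_zero hn, FF, cpow_neg, div_eq_mul_inv]

private lemma hA : ∑' n : ℕ, FF u n = riemannZeta (u-1) / (riemannZeta u)^2 := by
  rw [tsum_congr (FF_eq_term hu)]
  exact L_ffn hu

end Lseries

section EulerFactors

variable {u : ℂ} (hu : 2 < u.re) {p : ℕ} (hp : p.Prime)
include hu hp

private lemma norm_x_lt : ‖(p : ℂ) ^ (-u)‖ < 1 := by
  rw [norm_natCast_cpow_of_pos hp.pos]
  refine Real.rpow_lt_one_of_one_lt_of_neg ?_ (by simp; linarith)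
  exact_mod_cast hp.one_lt

private lemma norm_y_lt : ‖(p : ℂ) ^ ((1:ℂ) - u)‖ < 1 := by
  rw [norm_natCast_cpow_of_pos hp.pos]
  refine Real.rpow_lt_one_of_one_lt_of_neg ?_ (by simp; linarith)
  exact_mod_cast hp.one_lt

omit hu in
private lemma p_mul_x : (p : ℂ) * (p : ℂ) ^ (-u) = (p : ℂ) ^ ((1:ℂ) - u) := by
  have hp0 : (p : ℂ) ≠ 0 := Nat.cast_ne_zero.mpr hp.pos.ne'
  rw [sub_eq_add_neg, cpow_add _ _ hp0, cpow_one]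

private lemma hasSum_G : HasSum (fun k : ℕ => (p : ℂ) ^ k * ((p:ℂ)^(-u)) ^ k)
    ((1 - (p : ℂ) ^ ((1:ℂ) - u))⁻¹) := by
  have h := hasSum_geometric_of_norm_lt_one (norm_y_lt hu hp)
  convert h using 2 with k
  · rfl
  rw [← mul_pow, p_mul_x hp]

omit hu in
private lemma totient_pp_step (k : ℕ) :
    ((Nat.totient (p ^ (k+1)) : ℕ) : ℂ) = (p : ℂ) ^ (k+1) - (p : ℂ) ^ k := by
  rw [Nat.totient_prime_pow hp (Nat.succ_pos k)]
  push_cast [Nat.cast_sub hp.one_lt.le]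
  ring

private lemma hasSum_T : HasSum (fun k : ℕ => ((Nat.totient (p ^ k) : ℕ) : ℂ) * ((p:ℂ)^(-u)) ^ k)
    ((1 - (p:ℂ)^(-u)) * (1 - (p : ℂ) ^ ((1:ℂ) - u))⁻¹) := by
  refine tele (hasSum_G hu hp) (by simp) fun k => totient_pp_step hp k

omit hu in
private lemma ffn_pp_step (k : ℕ) :
    ffn (p ^ (k+1)) = ((Nat.totient (p ^ (k+1)) : ℕ) : ℂ) - ((Nat.totient (p ^ k) : ℕ) : ℂ) := by
  rw [show ffn (p ^ (k+1)) = ∑ d ∈ (p ^ (k+1)).divisors,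
    (moebius d : ℂ) * (Nat.totient (p ^ (k+1) / d) : ℂ) from rfl]
  rw [Nat.sum_divisors_prime_pow hp
    (f := fun d => (moebius d : ℂ) * (Nat.totient (p^(k+1) / d) : ℂ))]
  have hdiv : ∀ i ∈ Finset.range (k+2),
      (moebius (p ^ i) : ℂ) * (Nat.totient (p^(k+1) / p ^ i) : ℂ)
        = (moebius (p ^ i) : ℂ) * (Nat.totient (p^(k+1-i)) : ℂ) := by
    intro i hi
    have hik := Finset.mem_range.mp hi
    rw [Nat.pow_div (by omega : i ≤ k+1) hp.pos]
  rw [Finset.sum_congr rfl hdiv]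
  rw [Finset.sum_range_succ' _ (k+1), Finset.sum_range_succ' _ k]
  have hz : ∀ i ∈ Finset.range k,
      (moebius (p ^ (i+1+1)) : ℂ) * (Nat.totient (p^(k+1-(i+1+1))) : ℂ) = 0 := by
    intro i hi
    rw [moebius_apply_prime_pow hp (by omega)]
    simp
  rw [Finset.sum_eq_zero hz, pow_one, moebius_apply_prime hp,
      show k + 1 - 1 = k from rfl]
  simp only [pow_zero, moebius_apply_one, Nat.sub_zero]
  push_cast
  ring

private lemma hasSum_L : HasSum (fun k : ℕ => FF u (p ^ k))
    ((1 - (p:ℂ)^(-u)) * ((1 - (p:ℂ)^(-u)) * (1 - (p : ℂ) ^ ((1:ℂ) - u))⁻¹)) := by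
  have h := tele (a := fun k => ffn (p ^ k)) (hasSum_T hu hp) (by simp [ffn_one])
    (fun k => ffn_pp_step hp k)
  convert h using 2 with k
  rw [FF, cpow_nat_pow]

private lemma localsum_eq : ∑' k : ℕ, FF u (p ^ k)
    = (1 - (p:ℂ)^(-u)) * ((1 - (p:ℂ)^(-u)) * (1 - (p : ℂ) ^ ((1:ℂ) - u))⁻¹) :=
  (hasSum_L hu hp).tsum_eq

private lemma one_sub_x_ne : (1 : ℂ) - (p:ℂ)^(-u) ≠ 0 := by
  intro h
  rw [sub_eq_zero] at h
  have h2 := norm_x_lt hu hp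
  rw [← h] at h2
  simp at h2

private lemma one_sub_y_ne : (1 : ℂ) - (p:ℂ)^((1:ℂ) - u) ≠ 0 := by
  intro h
  rw [sub_eq_zero] at h
  have h2 := norm_y_lt hu hp
  rw [← h] at h2
  simp at h2

end EulerFactors

section Mult

variable {u : ℂ} (hu : 2 < u.re)
include hu

omit hu in
private lemma FF_zero : FF u 0 = 0 := by simp [FF, ffn_zero]

omit hu in
private lemma FF_one : FF u 1 = 1 := by simp [FF, ffn_one]

omit hu in
private lemma FF_mult : ∀ {m n : ℕ}, Nat.Coprime m n → FF u (m * n) = FF u m * FF u n := by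
  intro m n hmn
  rcases eq_or_ne m 0 with rfl | hm
  · rw [zero_mul, FF_zero, zero_mul]
  rcases eq_or_ne n 0 with rfl | hn
  · rw [mul_zero, FF_zero, mul_zero]
  have hcast : ((m * n : ℕ) : ℂ) ^ (-u) = (m : ℂ) ^ (-u) * (n : ℂ) ^ (-u) := by
    have h : ((m * n : ℕ) : ℂ) = (((m : ℝ)) : ℂ) * (((n : ℝ)) : ℂ) := by push_cast; ring
    rw [h, mul_cpow_ofReal_nonneg (by positivity) (by positivity)]
    norm_num
  rw [FF, FF, FF, ffn_mult hmn, hcast]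
  ring

private lemma FF_norm_summable : Summable (fun n => ‖FF u n‖) := by
  have hb : ∀ n : ℕ, ‖FF u n‖ ≤ (n : ℝ) ^ ((1 : ℝ) - u.re) := by
    intro n
    rcases eq_or_ne n 0 with rfl | hn
    · rw [FF_zero, Nat.cast_zero,
        Real.zero_rpow (by intro h; linarith : (1:ℝ) - u.re ≠ 0)]
      simp
    · have hn1 : (1 : ℝ) ≤ (n : ℝ) := by exact_mod_cast Nat.one_le_iff_ne_zero.mpr hn
      have hnp : (0 : ℝ) < (n : ℝ) := by linarith
      rw [FF, norm_mul, norm_natCast_cpow_of_pos (Nat.pos_of_ne_zero hn)]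
      calc ‖ffn n‖ * (n : ℝ) ^ (-u).re
          ≤ (n : ℝ) * (n : ℝ) ^ (-u).re := by
            refine mul_le_mul_of_nonneg_right (ffn_bound n) (Real.rpow_nonneg hnp.le _)
        _ = (n : ℝ) ^ ((1 : ℝ) - u.re) := by
            rw [show (1 : ℝ) - u.re = 1 + (-u).re by simp; ring, Real.rpow_add hnp,
              Real.rpow_one]
  refine Summable.of_nonneg_of_le (fun n => norm_nonneg _) hb ?_
  exact Real.summable_nat_rpow.mpr (by linarith)

end Mult

section Split

variable {r : ℕ} (hr : 0 < r) {u : ℂ} (hu : 2 < u.re)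
include hr hu

omit hu in
private lemma coprime_parts {a b : ℕ} (ha : a ∈ Nat.factoredNumbers r.primeFactors)
    (hb : 0 < b ∧ b.Coprime r) : Nat.Coprime a b := by
  rw [Nat.mem_factoredNumbers_iff_primeFactors_subset] at ha
  rw [← Nat.disjoint_primeFactors ha.1 hb.1.ne']
  exact Finset.disjoint_of_subset_left ha.2
    (Nat.Coprime.disjoint_primeFactors (Nat.Coprime.symm hb.2))

omit hu in
private lemma inj_mul : Function.Injective
    (fun z : Nat.factoredNumbers r.primeFactors × {q : ℕ // 0 < q ∧ q.Coprime r} =>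
      (z.1.1 * z.2.1 : ℕ)) := by
  rintro ⟨⟨a₁, ha₁⟩, ⟨b₁, hb₁⟩⟩ ⟨⟨a₂, ha₂⟩, ⟨b₂, hb₂⟩⟩ h
  simp only at h
  have h12 : Nat.Coprime a₁ b₂ := coprime_parts hr ha₁ hb₂
  have h21 : Nat.Coprime a₂ b₁ := coprime_parts hr ha₂ hb₁
  have ha : a₁ = a₂ := by
    refine Nat.dvd_antisymm ?_ ?_
    · exact (Nat.Coprime.dvd_of_dvd_mul_right h12) (h ▸ Dvd.intro b₁ rfl)
    · exact (Nat.Coprime.dvd_of_dvd_mul_right h21) (h.symm ▸ Dvd.intro b₂ rfl)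
  subst ha
  have ha0 : a₁ ≠ 0 := Nat.ne_zero_of_mem_factoredNumbers ha₁
  have hb : b₁ = b₂ := Nat.eq_of_mul_eq_mul_left (Nat.pos_of_ne_zero ha0) h
  simp [hb]

omit hu in
private lemma surj_mul {n : ℕ} (hn : n ≠ 0) :
    ∃ (a : ℕ) (b : ℕ), a ∈ Nat.factoredNumbers r.primeFactors ∧ (0 < b ∧ b.Coprime r)
      ∧ a * b = n := by
  classical
  refine ⟨∏ p ∈ n.primeFactors.filter (· ∈ r.primeFactors), p ^ n.factorization p,
         ∏ p ∈ n.primeFactors.filter (· ∉ r.primeFactors), p ^ n.factorization p,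
         ?_, ⟨?_, ?_⟩, ?_⟩
  · rw [Nat.mem_factoredNumbers_iff_primeFactors_subset]
    constructor
    · refine Finset.prod_ne_zero_iff.mpr fun p hp => ?_
      exact pow_ne_zero _ (Nat.prime_of_mem_primeFactors (Finset.mem_filter.mp hp).1).pos.ne'
    · intro q hq
      have hq' : q.Prime := Nat.prime_of_mem_primeFactors hq
      have hdvd : (q : ℕ) ∣ ∏ p ∈ n.primeFactors.filter (· ∈ r.primeFactors),
          p ^ n.factorization p := Nat.dvd_of_mem_primeFactors hq
      obtain ⟨p, hp, hqp⟩ := (Prime.dvd_finset_prod_iff hq'.prime _).mp hdvd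
      obtain ⟨hp1, hp2⟩ := Finset.mem_filter.mp hp
      have hqpe : q = p := (Nat.prime_dvd_prime_iff_eq hq'
        (Nat.prime_of_mem_primeFactors hp1)).mp (hq'.dvd_of_dvd_pow hqp)
      exact hqpe ▸ hp2
  · refine Finset.prod_pos fun p hp => ?_
    exact pow_pos (Nat.prime_of_mem_primeFactors (Finset.mem_filter.mp hp).1).pos _
  · have hb0 : (∏ p ∈ n.primeFactors.filter (· ∉ r.primeFactors),
        p ^ n.factorization p) ≠ 0 := by
      refine Finset.prod_ne_zero_iff.mpr fun p hp => ?_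
      exact pow_ne_zero _ (Nat.prime_of_mem_primeFactors (Finset.mem_filter.mp hp).1).pos.ne'
    rw [← Nat.disjoint_primeFactors hb0 hr.ne']
    rw [Finset.disjoint_left]
    intro q hq hqr
    have hq' : q.Prime := Nat.prime_of_mem_primeFactors hq
    have hdvd := Nat.dvd_of_mem_primeFactors hq
    obtain ⟨p, hp, hqp⟩ := (Prime.dvd_finset_prod_iff hq'.prime _).mp hdvd
    obtain ⟨hp1, hp2⟩ := Finset.mem_filter.mp hp
    have hqpe : q = p := (Nat.prime_dvd_prime_iff_eq hq'
      (Nat.prime_of_mem_primeFactors hp1)).mp (hq'.dvd_of_dvd_pow hqp)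
    exact hp2 (hqpe ▸ hqr)
  · rw [Finset.prod_filter_mul_prod_filter_not]
    rw [← Nat.support_factorization]
    exact Nat.factorization_prod_pow_eq_self hn

private lemma split_eq :
    (∑' n : ℕ, FF u n) =
      (∑' a : Nat.factoredNumbers r.primeFactors, FF u a) *
      (∑' b : {q : ℕ // 0 < q ∧ q.Coprime r}, FF u b.1) := by
  have hS : Summable (fun a : Nat.factoredNumbers r.primeFactors => ‖FF u a‖) :=
    (FF_norm_summable hu).subtype _
  have hC : Summable (fun b : {q : ℕ // 0 < q ∧ q.Coprime r} => ‖FF u b.1‖) :=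
    (FF_norm_summable hu).comp_injective Subtype.val_injective
  rw [tsum_mul_tsum_of_summable_norm hS hC]
  have h1 : ∀ z : Nat.factoredNumbers r.primeFactors × {q : ℕ // 0 < q ∧ q.Coprime r},
      FF u z.1 * FF u z.2.1 = FF u (z.1.1 * z.2.1) :=
    fun z => (FF_mult (coprime_parts hr z.1.2 z.2.2)).symm
  have h2 : Function.support (FF u) ⊆ Set.range
      (fun z : Nat.factoredNumbers r.primeFactors × {q : ℕ // 0 < q ∧ q.Coprime r} =>
        (z.1.1 * z.2.1 : ℕ)) := by
    intro n hn
    have hn0 : n ≠ 0 := by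
      intro h
      subst h
      exact hn FF_zero
    obtain ⟨a, b, ha, hb, hab⟩ := surj_mul hr hn0
    exact ⟨⟨⟨a, ha⟩, ⟨b, hb⟩⟩, hab⟩
  exact ((tsum_congr h1).trans (Function.Injective.tsum_eq (inj_mul hr) h2)).symm

private lemma smooth_eq :
    (∑' a : Nat.factoredNumbers r.primeFactors, FF u a)
      = ∏ p ∈ r.primeFactors,
          ((1 - (p:ℂ)^(-u)) * ((1 - (p:ℂ)^(-u)) * (1 - (p : ℂ) ^ ((1:ℂ) - u))⁻¹)) := by
  rw [← EulerProduct.prod_filter_prime_tsum_eq_tsum_factoredNumbers (FF_one)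
    (fun {m n} h => FF_mult h) (FF_norm_summable hu) r.primeFactors]
  rw [Finset.filter_true_of_mem fun p hp => Nat.prime_of_mem_primeFactors hp]
  exact Finset.prod_congr rfl fun p hp => localsum_eq hu (Nat.prime_of_mem_primeFactors hp)

private lemma final_eq :
    (∑' b : {q : ℕ // 0 < q ∧ q.Coprime r}, FF u b.1)
      = riemannZeta (u - 1) / (riemannZeta u) ^ 2 *
        ∏ p ∈ r.primeFactors,
          (1 - (p : ℂ) ^ ((1 : ℂ) - u)) * ((1 - (p : ℂ) ^ (-u))⁻¹) ^ 2 := by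
  set C := ∑' b : {q : ℕ // 0 < q ∧ q.Coprime r}, FF u b.1 with hCdef
  have hprod1 : (∏ p ∈ r.primeFactors,
        ((1 - (p:ℂ)^(-u)) * ((1 - (p:ℂ)^(-u)) * (1 - (p : ℂ) ^ ((1:ℂ) - u))⁻¹)))
      * (∏ p ∈ r.primeFactors,
        (1 - (p : ℂ) ^ ((1 : ℂ) - u)) * ((1 - (p : ℂ) ^ (-u))⁻¹) ^ 2) = 1 := by
    rw [← Finset.prod_mul_distrib]
    rw [Finset.prod_congr rfl (fun p hp => ?_), Finset.prod_const_one]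
    have hp := Nat.prime_of_mem_primeFactors hp
    field_simp [one_sub_x_ne hu hp, one_sub_y_ne hu hp]
  calc C = 1 * C := (one_mul C).symm
    _ = (∏ p ∈ r.primeFactors,
          (1 - (p : ℂ) ^ ((1 : ℂ) - u)) * ((1 - (p : ℂ) ^ (-u))⁻¹) ^ 2) *
        ((∏ p ∈ r.primeFactors,
          ((1 - (p:ℂ)^(-u)) * ((1 - (p:ℂ)^(-u)) * (1 - (p : ℂ) ^ ((1:ℂ) - u))⁻¹))) * C) := by
        rw [← mul_assoc, mul_comm (∏ p ∈ r.primeFactors,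
          (1 - (p : ℂ) ^ ((1 : ℂ) - u)) * ((1 - (p : ℂ) ^ (-u))⁻¹) ^ 2) _, hprod1]
    _ = (∏ p ∈ r.primeFactors,
          (1 - (p : ℂ) ^ ((1 : ℂ) - u)) * ((1 - (p : ℂ) ^ (-u))⁻¹) ^ 2)
        * (∑' n : ℕ, FF u n) := by
        rw [← smooth_eq hr hu, ← split_eq hr hu]
    _ = _ := by rw [hA hu]; ring

end Split

theorem stmt_4 (r : ℕ) (hr : 0 < r) (u : ℂ) (hu : 2 < u.re) :
    Summable (fun q : {q : ℕ // 0 < q ∧ q.Coprime r} =>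
      ‖(∑ d ∈ q.1.divisors, (moebius d : ℂ) * (Nat.totient (q.1 / d) : ℂ)) *
        (q.1 : ℂ) ^ (-u)‖) ∧
    (∑' q : {q : ℕ // 0 < q ∧ q.Coprime r},
        (∑ d ∈ q.1.divisors, (moebius d : ℂ) * (Nat.totient (q.1 / d) : ℂ)) *
          (q.1 : ℂ) ^ (-u)) =
      riemannZeta (u - 1) / (riemannZeta u) ^ 2 *
        ∏ p ∈ r.primeFactors,
          (1 - (p : ℂ) ^ ((1 : ℂ) - u)) * ((1 - (p : ℂ) ^ (-u))⁻¹) ^ 2 := by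
  constructor
  · exact (FF_norm_summable hu).comp_injective Subtype.val_injective
  · exact final_eq hr hu
end
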